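/- arXiv:1803.06270 — 2 statements merged into one kernel-verified Lean document; each statement's English description precedes it below -/
import Mathlib

section
/- Let N ≥ 1, A ≥ a > 0, α > -1, β ∈ (0, α+2), and b, M, f̄ ≥ 0. There exists C₀ > 0 (depending on a, A, N, b, M, κ and an upper bound C₁ on the Hessian of d) such that for all C ≥ C₀ the following holds: if d: U → ℝ is a C² function on an open set U ⊂ ℝ^N with |∇d(x)| = 1 and D²d(x) ≤ C₁ I for all x ∈ U, and 0 < C d(x) < 2κ on U, then the function φ(x) = log(1 + C d(x)) satisfies, pointwise in U, |∇φ|^α 𝓜⁺(D²φ) + b |∇φ|^β ≤ -M. -/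
open Matrix

/-- The Pucci maximal operator `𝓜⁺` with ellipticity constants `a ≤ A`,
given by `sup { tr (Q M) : Q symmetric, a I ≤ Q ≤ A I }`. -/
noncomputable def pucciPlus (a A : ℝ) {N : ℕ} (M : Matrix (Fin N) (Fin N) ℝ) : ℝ :=
  sSup {t : ℝ | ∃ Q : Matrix (Fin N) (Fin N) ℝ, Q.IsHermitian ∧
    (Q - a • (1 : Matrix (Fin N) (Fin N) ℝ)).PosSemidef ∧
    (A • (1 : Matrix (Fin N) (Fin N) ℝ) - Q).PosSemidef ∧ t = (Q * M).trace}

/-!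
At a point `x`, write `p = ∇d(x)`, `H = D²d(x)`, `t = d(x)` and `s = C / (1 + C t)`, so that
`∇φ = s p` and `D²φ = s H - s² p ⊗ p`. Testing `D²φ` against `a I ≤ Q ≤ A I` and using
`|p| = 1`, `H ≤ C₁ I` gives `𝓜⁺(D²φ) ≤ C₁ A N s - a s²`, hence the left-hand side is at most
`C₁ A N s^(α+1) - a s^(α+2) + b s^β`. Since `α + 2` is positive and exceeds both `α + 1` and `β`,
this tends to `-∞` as `s → ∞`; and `s > C / (1 + 2κ)` is large once `C` is.
-/

open Filter Topology
open scoped ComplexOrder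

namespace Matrix

variable {n : Type*} [Fintype n]

theorem PosSemidef.trace_mul_nonneg {𝕜 : Type*} [RCLike 𝕜] {Q B : Matrix n n 𝕜}
    (hQ : Q.PosSemidef) (hB : B.PosSemidef) : 0 ≤ (Q * B).trace := by
  classical
  open scoped MatrixOrder in
  obtain ⟨L, rfl⟩ := CStarAlgebra.nonneg_iff_eq_star_mul_self.mp hB.nonneg
  rw [star_eq_conjTranspose, ← Matrix.mul_assoc, trace_mul_cycle]
  exact (hQ.mul_mul_conjTranspose_same L).trace_nonneg

variable [DecidableEq n]

theorem trace_le_of_posSemidef_smul_one_sub {Q : Matrix n n ℝ} {c : ℝ}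
    (hQ : (c • 1 - Q).PosSemidef) : Q.trace ≤ c * Fintype.card n := by
  have := hQ.trace_nonneg
  rw [trace_sub, trace_smul, trace_one, smul_eq_mul] at this
  linarith

theorem trace_mul_le_of_posSemidef_smul_one_sub {Q H : Matrix n n ℝ} {c : ℝ}
    (hQ : Q.PosSemidef) (hH : (c • 1 - H).PosSemidef) : (Q * H).trace ≤ c * Q.trace := by
  have := hQ.trace_mul_nonneg hH
  rw [Matrix.mul_sub, trace_sub, Matrix.mul_smul, mul_one, trace_smul, smul_eq_mul] at this
  linarith

theorem le_trace_mul_vecMulVec_of_posSemidef_sub_smul_one {Q : Matrix n n ℝ} {a : ℝ}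
    {p : n → ℝ} (hQ : (Q - a • 1).PosSemidef) (hp : p ⬝ᵥ p = 1) :
    a ≤ (Q * vecMulVec p p).trace := by
  have := hQ.trace_mul_nonneg (posSemidef_vecMulVec_self_star p)
  simp only [star_trivial] at this
  rw [Matrix.sub_mul, trace_sub, Matrix.smul_mul, Matrix.one_mul, trace_smul, trace_vecMulVec,
    hp, smul_eq_mul, mul_one] at this
  linarith

end Matrix

theorem pucciPlus_le_of_forall {N : ℕ} {a A c : ℝ} {X : Matrix (Fin N) (Fin N) ℝ} (haA : a ≤ A)
    (h : ∀ Q : Matrix (Fin N) (Fin N) ℝ, (Q - a • 1).PosSemidef → (A • 1 - Q).PosSemidef →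
      (Q * X).trace ≤ c) :
    pucciPlus a A X ≤ c := by
  refine csSup_le ⟨_, a • 1, isHermitian_one.smul (.all a), ?_, ?_, rfl⟩ ?_
  · simpa using PosSemidef.zero
  · simpa [← sub_smul] using PosSemidef.one.smul (sub_nonneg.2 haA)
  · rintro _ ⟨Q, -, hQa, hQA, rfl⟩
    exact h Q hQa hQA

theorem pucciPlus_smul_sub_smul_vecMulVec_le {N : ℕ} {a A C₁ s r : ℝ}
    {H : Matrix (Fin N) (Fin N) ℝ} {p : Fin N → ℝ} (ha : 0 ≤ a) (haA : a ≤ A) (hC₁ : 0 ≤ C₁)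
    (hs : 0 ≤ s) (hr : 0 ≤ r) (hp : p ⬝ᵥ p = 1) (hH : (C₁ • 1 - H).PosSemidef) :
    pucciPlus a A (s • H - r • vecMulVec p p) ≤ s * (C₁ * (A * N)) - r * a := by
  refine pucciPlus_le_of_forall haA fun Q hQa hQA => ?_
  have hQ : Q.PosSemidef := by simpa using hQa.add (PosSemidef.one.smul ha)
  have hQH : (Q * H).trace ≤ C₁ * (A * N) := by
    refine (trace_mul_le_of_posSemidef_smul_one_sub hQ hH).trans (mul_le_mul_of_nonneg_left ?_ hC₁)
    simpa using trace_le_of_posSemidef_smul_one_sub hQA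
  have hQp := le_trace_mul_vecMulVec_of_posSemidef_sub_smul_one hQa hp
  rw [Matrix.mul_sub, trace_sub, Matrix.mul_smul, Matrix.mul_smul, trace_smul, trace_smul,
    smul_eq_mul, smul_eq_mul]
  exact sub_le_sub (mul_le_mul_of_nonneg_left hQH hs) (mul_le_mul_of_nonneg_left hQp hr)

theorem tendsto_mul_rpow_sub_mul_rpow_add_mul_rpow_atBot {K a b e e₁ e₂ : ℝ} (ha : 0 < a)
    (he : 0 < e) (h₁ : e₁ < e) (h₂ : e₂ < e) :
    Tendsto (fun s : ℝ => K * s ^ e₁ - a * s ^ e + b * s ^ e₂) atTop atBot := by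
  have hlim : Tendsto (fun s : ℝ => K * s ^ (-(e - e₁)) - a + b * s ^ (-(e - e₂))) atTop
      (𝓝 (-a)) := by
    simpa using (((tendsto_rpow_neg_atTop (sub_pos.2 h₁)).const_mul K).sub_const a).add
      ((tendsto_rpow_neg_atTop (sub_pos.2 h₂)).const_mul b)
  refine ((tendsto_rpow_atTop he).atTop_mul_neg (neg_neg_of_pos ha) hlim).congr' ?_
  filter_upwards [eventually_gt_atTop 0] with s hs
  have hpow (e' : ℝ) : s ^ e * s ^ (-(e - e')) = s ^ e' := by
    rw [← Real.rpow_add hs]; ring_nf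
  linear_combination K * hpow e₁ + b * hpow e₂

theorem stmt_11_general (N : ℕ) (a A α β b M κ C₁ : ℝ)
    (ha : 0 < a) (haA : a ≤ A) (hα : -1 < α) (hβ : β < α + 2)
    (hκ : 0 < κ) (hC₁ : 0 ≤ C₁) :
    ∃ C₀ > 0, ∀ C ≥ C₀, ∀ (p : Fin N → ℝ) (H : Matrix (Fin N) (Fin N) ℝ) (t : ℝ),
      p ⬝ᵥ p = 1 → H.IsHermitian →
      (C₁ • (1 : Matrix (Fin N) (Fin N) ℝ) - H).PosSemidef →
      0 < C * t → C * t < 2 * κ →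
      (C / (1 + C * t)) ^ α *
          pucciPlus a A ((C / (1 + C * t)) • H -
            (C ^ 2 / (1 + C * t) ^ 2) • Matrix.vecMulVec p p) +
        b * (C / (1 + C * t)) ^ β ≤ -M := by
  obtain ⟨S₀, hS₀⟩ := eventually_atTop.1 <|
    ((tendsto_mul_rpow_sub_mul_rpow_add_mul_rpow_atBot (K := C₁ * (A * N)) (b := b) ha
      (by linarith : 0 < α + 2) (by linarith : α + 1 < α + 2) hβ).eventually_le_atBot (-M)).and
      (eventually_gt_atTop 0)
  have hS₀pos := (hS₀ S₀ le_rfl).2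
  refine ⟨(1 + 2 * κ) * S₀, by positivity, fun C hC p H t hp _ hH ht htκ => ?_⟩
  set s := C / (1 + C * t)
  have hs : S₀ ≤ s := by
    rw [le_div_iff₀ (by linarith)]
    nlinarith
  have hs0 : 0 < s := (hS₀ s hs).2
  rw [← div_pow]
  calc s ^ α * pucciPlus a A (s • H - s ^ 2 • vecMulVec p p) + b * s ^ β
      ≤ s ^ α * (s * (C₁ * (A * N)) - s ^ 2 * a) + b * s ^ β := by
        gcongr
        exact pucciPlus_smul_sub_smul_vecMulVec_le ha.le haA hC₁ hs0.le (sq_nonneg s) hp hH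
    _ = C₁ * (A * N) * s ^ (α + 1) - a * s ^ (α + 2) + b * s ^ β := by
        rw [Real.rpow_add_one hs0.ne', Real.rpow_add hs0, Real.rpow_two]
        ring
    _ ≤ -M := (hS₀ s hs).1

/-- Pointwise form of the supersolution property of `φ = log (1 + C d)`:
at a point where `∇ d = p` (a unit vector), `D² d = H ≤ C₁ I` and `0 < C d < 2 κ`,
one has `∇ φ = (C / (1 + C d)) p`,
`D² φ = (C / (1 + C d)) H - (C² / (1 + C d)²) p ⊗ p`, and
`|∇φ|^α 𝓜⁺(D²φ) + b |∇φ|^β ≤ -M`. -/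
theorem stmt_11 (N : ℕ) (hN : 1 ≤ N) (a A α β b M κ C₁ : ℝ)
    (ha : 0 < a) (haA : a ≤ A) (hα : -1 < α) (hβ0 : 0 < β) (hβ : β < α + 2)
    (hb : 0 ≤ b) (hM : 0 ≤ M) (hκ : 0 < κ) (hC₁ : 0 ≤ C₁) :
    ∃ C₀ > 0, ∀ C ≥ C₀, ∀ (p : Fin N → ℝ) (H : Matrix (Fin N) (Fin N) ℝ) (t : ℝ),
      p ⬝ᵥ p = 1 → H.IsHermitian →
      (C₁ • (1 : Matrix (Fin N) (Fin N) ℝ) - H).PosSemidef →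
      0 < C * t → C * t < 2 * κ →
      (C / (1 + C * t)) ^ α *
          pucciPlus a A ((C / (1 + C * t)) • H -
            (C ^ 2 / (1 + C * t) ^ 2) • Matrix.vecMulVec p p) +
        b * (C / (1 + C * t)) ^ β ≤ -M :=
  stmt_11_general N a A α β b M κ C₁ ha haA hα hβ hκ hC₁
end

section
/- Let Ω ⊂ ℝ^N be open and let f: Ω × ℝ → ℝ be continuous. If u and v are both supersolutions (in the singular viscosity sense for exponent α ∈ (-1,0)) of -F(∇w, D²w) + b(x)|∇w|^β = f(x, w) in Ω, then min(u, v) is also a supersolution. -/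
/-
At a point where `u ≤ v`, any test function touching `min u v` from below also touches `u` from
below, so the test-function inequality for `min u v` there is inherited from `u`. If `u` is
instead locally constant at that point, a touching test function has a local maximum there,
hence zero gradient, and the test-function condition is vacuous.
-/

open Filter Topology

/-- The Hessian of `φ` at `x` as an `N × N` matrix, in coordinates. -/
noncomputable def hessMatrix {N : ℕ} (φ : EuclideanSpace ℝ (Fin N) → ℝ)
    (x : EuclideanSpace ℝ (Fin N)) : Matrix (Fin N) (Fin N) ℝ :=
  Matrix.of fun i j =>
    iteratedFDeriv ℝ 2 φ x ![EuclideanSpace.single i 1, EuclideanSpace.single j 1]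

/-- Viscosity supersolution of `-F(∇w, D²w) + b(x)|∇w|^β = f(x,w)` in `Ω`, in the singular
sense suited to `α ∈ (-1,0)`: at each point, either `w` is locally constant there and
`f(x₀, w(x₀)) ≤ 0`, or every `C²` test function touching `w` from below with nonvanishing
gradient satisfies the supersolution inequality. -/
def IsSingularSupersolution {N : ℕ}
    (F : EuclideanSpace ℝ (Fin N) → Matrix (Fin N) (Fin N) ℝ → ℝ)
    (b : EuclideanSpace ℝ (Fin N) → ℝ) (β : ℝ)
    (f : EuclideanSpace ℝ (Fin N) → ℝ → ℝ)
    (Ω : Set (EuclideanSpace ℝ (Fin N))) (w : EuclideanSpace ℝ (Fin N) → ℝ) : Prop :=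
  LowerSemicontinuousOn w Ω ∧
  ∀ x₀ ∈ Ω,
    ((∀ᶠ x in 𝓝 x₀, w x = w x₀) ∧ f x₀ (w x₀) ≤ 0) ∨
    (∀ φ : EuclideanSpace ℝ (Fin N) → ℝ, ContDiffAt ℝ 2 φ x₀ →
      (∀ᶠ x in 𝓝 x₀, w x₀ - φ x₀ ≤ w x - φ x) →
      gradient φ x₀ ≠ 0 →
      f x₀ (w x₀) ≤
        -F (gradient φ x₀) (hessMatrix φ x₀) + b x₀ * ‖gradient φ x₀‖ ^ β)

theorem IsLocalMax.gradient_eq_zero {E : Type*} [NormedAddCommGroup E] [InnerProductSpace ℝ E]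
    [CompleteSpace E] {φ : E → ℝ} {x₀ : E} (h : IsLocalMax φ x₀) : gradient φ x₀ = 0 := by
  simp [gradient, h.fderiv_eq_zero]

theorem IsLocalMin.isLocalMax_of_eventually_eq {X : Type*} [TopologicalSpace X] {w φ : X → ℝ}
    {x₀ : X} (hmin : IsLocalMin (fun x => w x - φ x) x₀) (hconst : ∀ᶠ x in 𝓝 x₀, w x = w x₀) :
    IsLocalMax φ x₀ := by
  filter_upwards [hmin, hconst] with x hx hwx
  linarith

theorem IsLocalMin.sub_of_le_of_eq {X : Type*} [TopologicalSpace X] {ψ w φ : X → ℝ} {x₀ : X}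
    (hmin : IsLocalMin (fun x => ψ x - φ x) x₀) (hle : ∀ x, ψ x ≤ w x) (heq : ψ x₀ = w x₀) :
    IsLocalMin (fun x => w x - φ x) x₀ := by
  filter_upwards [hmin] with x hx
  linarith [hle x]

section Supersolution

variable {N : ℕ} {F : EuclideanSpace ℝ (Fin N) → Matrix (Fin N) (Fin N) ℝ → ℝ}
  {b : EuclideanSpace ℝ (Fin N) → ℝ} {β : ℝ} {f : EuclideanSpace ℝ (Fin N) → ℝ → ℝ}
  {Ω : Set (EuclideanSpace ℝ (Fin N))} {w ψ : EuclideanSpace ℝ (Fin N) → ℝ}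
  {x₀ : EuclideanSpace ℝ (Fin N)}

def SupersolutionTestAt (F : EuclideanSpace ℝ (Fin N) → Matrix (Fin N) (Fin N) ℝ → ℝ)
    (b : EuclideanSpace ℝ (Fin N) → ℝ) (β : ℝ) (f : EuclideanSpace ℝ (Fin N) → ℝ → ℝ)
    (w : EuclideanSpace ℝ (Fin N) → ℝ) (x₀ : EuclideanSpace ℝ (Fin N)) : Prop :=
  ∀ φ : EuclideanSpace ℝ (Fin N) → ℝ, ContDiffAt ℝ 2 φ x₀ →
    IsLocalMin (fun x => w x - φ x) x₀ → gradient φ x₀ ≠ 0 →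
    f x₀ (w x₀) ≤ -F (gradient φ x₀) (hessMatrix φ x₀) + b x₀ * ‖gradient φ x₀‖ ^ β

theorem IsSingularSupersolution.supersolutionTestAt_of_le_of_eq
    (hw : IsSingularSupersolution F b β f Ω w) (hx₀ : x₀ ∈ Ω) (hle : ∀ x, ψ x ≤ w x)
    (heq : ψ x₀ = w x₀) : SupersolutionTestAt F b β f ψ x₀ := by
  intro φ hφ hmin hgrad
  have hmin_w := hmin.sub_of_le_of_eq hle heq
  rcases hw.2 x₀ hx₀ with ⟨hconst, -⟩ | htest
  · exact absurd (hmin_w.isLocalMax_of_eventually_eq hconst).gradient_eq_zero hgrad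
  · rw [heq]
    exact htest φ hφ hmin_w hgrad

end Supersolution

theorem stmt_15_general (N : ℕ) (β : ℝ)
    (F : EuclideanSpace ℝ (Fin N) → Matrix (Fin N) (Fin N) ℝ → ℝ)
    (b : EuclideanSpace ℝ (Fin N) → ℝ)
    (f : EuclideanSpace ℝ (Fin N) → ℝ → ℝ)
    (Ω : Set (EuclideanSpace ℝ (Fin N)))
    (u v : EuclideanSpace ℝ (Fin N) → ℝ)
    (hu : IsSingularSupersolution F b β f Ω u)
    (hv : IsSingularSupersolution F b β f Ω v) :
    IsSingularSupersolution F b β f Ω (fun x => min (u x) (v x)) := by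
  refine ⟨hu.1.inf hv.1, fun x₀ hx₀ => Or.inr ?_⟩
  rcases le_total (u x₀) (v x₀) with h | h
  · exact hu.supersolutionTestAt_of_le_of_eq hx₀ (fun _ => min_le_left _ _) (min_eq_left h)
  · exact hv.supersolutionTestAt_of_le_of_eq hx₀ (fun _ => min_le_right _ _) (min_eq_right h)

theorem stmt_15 (N : ℕ) (α β : ℝ) (hα : α ∈ Set.Ioo (-1 : ℝ) 0) (hβ : 0 < β)
    (F : EuclideanSpace ℝ (Fin N) → Matrix (Fin N) (Fin N) ℝ → ℝ)
    (hF : Continuous fun pM : EuclideanSpace ℝ (Fin N) × Matrix (Fin N) (Fin N) ℝ =>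
      F pM.1 pM.2)
    (b : EuclideanSpace ℝ (Fin N) → ℝ) (hb : Continuous b)
    (f : EuclideanSpace ℝ (Fin N) → ℝ → ℝ)
    (hf : Continuous fun xr : EuclideanSpace ℝ (Fin N) × ℝ => f xr.1 xr.2)
    (Ω : Set (EuclideanSpace ℝ (Fin N))) (hΩ : IsOpen Ω)
    (u v : EuclideanSpace ℝ (Fin N) → ℝ)
    (hu : IsSingularSupersolution F b β f Ω u)
    (hv : IsSingularSupersolution F b β f Ω v) :
    IsSingularSupersolution F b β f Ω (fun x => min (u x) (v x)) :=
  stmt_15_general N β F b f Ω u v hu hv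
end
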